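/- For each t ∈ k, the A-module M_t with k-basis v₁, v₂, v₃, v₄ and action x·v₁ = v₃, x·v₂ = 0, x·v₃ = v₄, x·v₄ = 0, y·v₁ = t v₃, y·v₂ = v₄, y·v₃ = t v₄, y·v₄ = 0 is a well-defined indecomposable A-module of length 4 with dim_k M_t/(m·M_t) = 2 and m·M_t ≅ A/(x², y − t x). -/

import Mathlib

open MvPolynomial

/-- `m = (x,y) ⊂ A = k[x,y]`. -/
noncomputable def mIdeal (k : Type) [Field k] : Ideal (MvPolynomial (Fin 2) k) :=
  Ideal.span {X 0, X 1}

/-- The multiplication table of the module `M_t`: `x·v₁ = v₃`, `x·v₂ = 0`, `x·v₃ = v₄`,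
`x·v₄ = 0`, `y·v₁ = t v₃`, `y·v₂ = v₄`, `y·v₃ = t v₄`, `y·v₄ = 0` (indices `0,…,3`). -/
def IsMt (k : Type) [Field k] (t : k) (M : Type) [AddCommGroup M]
    [Module (MvPolynomial (Fin 2) k) M] [Module k M]
    [IsScalarTower k (MvPolynomial (Fin 2) k) M] (v : Module.Basis (Fin 4) k M) : Prop :=
  (X 0 : MvPolynomial (Fin 2) k) • v 0 = v 2 ∧
  (X 0 : MvPolynomial (Fin 2) k) • v 1 = 0 ∧
  (X 0 : MvPolynomial (Fin 2) k) • v 2 = v 3 ∧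
  (X 0 : MvPolynomial (Fin 2) k) • v 3 = 0 ∧
  (X 1 : MvPolynomial (Fin 2) k) • v 0 = t • v 2 ∧
  (X 1 : MvPolynomial (Fin 2) k) • v 1 = v 3 ∧
  (X 1 : MvPolynomial (Fin 2) k) • v 2 = t • v 3 ∧
  (X 1 : MvPolynomial (Fin 2) k) • v 3 = 0

/-!
Every nonzero submodule of `M_t` contains `v 3` (the paper's `v₄`): according to the first
nonzero coordinate among those of `v 0`, `v 2`, `v 1`, a nonzero vector is sent onto a nonzero
multiple of `v 3` by `x²`, `x`, `y` or `1`. Hence no two nonzero submodules meet trivially.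
The images of `x` and `y` lie in `k v 2 ⊕ k v 3 = A v 2`, so `m M_t = A v 2`; its annihilator is
`(x², y - t x)` because every polynomial is congruent to some `a + b x` modulo this ideal and
`a v 2 + b v 3 = 0` forces `a = b = 0`. Existence: the two matrices commute, so `A` acts through
the commutative subalgebra they generate.
-/

section CommutingFamily

open scoped IsMulCommutative

variable {σ R B : Type*} [CommSemiring R] [Semiring B] [Algebra R B]

noncomputable def MvPolynomial.aevalOfCommute (f : σ → B) (hf : ∀ i j, Commute (f i) (f j)) :
    MvPolynomial σ R →ₐ[R] B :=
  haveI := Algebra.isMulCommutative_adjoin R (s := Set.range f) <| by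
    rintro _ ⟨i, rfl⟩ _ ⟨j, rfl⟩
    exact hf i j
  (Algebra.adjoin R (Set.range f)).val.comp
    (aeval fun i => ⟨f i, Algebra.subset_adjoin ⟨i, rfl⟩⟩)

@[simp]
theorem MvPolynomial.aevalOfCommute_X (f : σ → B) (hf : ∀ i j, Commute (f i) (f j)) (i : σ) :
    aevalOfCommute (R := R) f hf (X i) = f i := by
  simp [aevalOfCommute]

end CommutingFamily

theorem exists_module_mvPolynomial_of_commute {σ k V : Type*} [CommSemiring k]
    [AddCommMonoid V] [Module k V] (f : σ → Module.End k V) (hf : ∀ i j, Commute (f i) (f j)) :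
    ∃ (_ : Module (MvPolynomial σ k) V) (_ : IsScalarTower k (MvPolynomial σ k) V),
      ∀ i w, (X i : MvPolynomial σ k) • w = f i w := by
  let φ := MvPolynomial.aevalOfCommute (R := k) f hf
  let _ : Module (MvPolynomial σ k) V := Module.compHom V φ.toRingHom
  refine ⟨inferInstance, ⟨fun c p w => ?_⟩, fun i w => ?_⟩
  · change φ (c • p) w = c • φ p w
    rw [map_smul, LinearMap.smul_apply]
  · change φ (X i) w = f i w
    rw [MvPolynomial.aevalOfCommute_X]

theorem eq_bot_or_eq_bot_of_isCompl_of_forall_mem {R M : Type*} [Ring R] [AddCommGroup M]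
    [Module R M] {w : M} (hw : w ≠ 0) (h : ∀ N : Submodule R M, N ≠ ⊥ → w ∈ N)
    {N₁ N₂ : Submodule R M} (hc : IsCompl N₁ N₂) : N₁ = ⊥ ∨ N₂ = ⊥ := by
  by_contra! hne
  have hw₁₂ : w ∈ N₁ ⊓ N₂ := ⟨h N₁ hne.1, h N₂ hne.2⟩
  rw [hc.inf_eq_bot, Submodule.mem_bot] at hw₁₂
  exact hw hw₁₂

theorem MvPolynomial.smul_mem_of_forall_X_smul_mem {σ k M : Type*} [CommSemiring k]
    [AddCommMonoid M] [Module (MvPolynomial σ k) M] [Module k M]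
    [IsScalarTower k (MvPolynomial σ k) M] {W : Submodule k M}
    (hW : ∀ i, ∀ w ∈ W, (X i : MvPolynomial σ k) • w ∈ W) (p : MvPolynomial σ k) {w : M}
    (hw : w ∈ W) : p • w ∈ W := by
  induction p using MvPolynomial.induction_on generalizing w with
  | C a => rw [← algebraMap_eq, algebraMap_smul]; exact W.smul_mem a hw
  | add p q hp hq => rw [add_smul]; exact W.add_mem (hp hw) (hq hw)
  | mul_X p i hp => rw [mul_smul]; exact hp (hW i w hw)

theorem Module.Basis.linearIndependent_pair {ι R V : Type*} [Semiring R] [AddCommMonoid V]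
    [Module R V] (b : Module.Basis ι R V) {i j : ι} (hij : i ≠ j) :
    LinearIndependent R ![b i, b j] := by
  convert b.linearIndependent.comp ![i, j]
    (by simp [Function.Injective, Fin.forall_fin_two, hij, hij.symm])
  ext x
  fin_cases x <;> rfl

theorem Module.Basis.finrank_span_pair {ι R V : Type*} [DivisionRing R] [AddCommGroup V]
    [Module R V] (b : Module.Basis ι R V) {i j : ι} (hij : i ≠ j) :
    Module.finrank R (Submodule.span R {b i, b j}) = 2 := by
  rw [← Matrix.range_cons_cons_empty (b i) (b j) ![],
    finrank_span_eq_card (b.linearIndependent_pair hij), Fintype.card_fin]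

theorem MvPolynomial.exists_sub_C_add_C_mul_X_mem {k : Type*} [CommRing k] (t : k)
    (p : MvPolynomial (Fin 2) k) :
    ∃ a b : k, p - (C a + C b * X 0) ∈ Ideal.span {X 0 ^ 2, X 1 - C t * X 0} := by
  set I : Ideal (MvPolynomial (Fin 2) k) := Ideal.span {X 0 ^ 2, X 1 - C t * X 0}
  have hx2 : (X 0 : MvPolynomial (Fin 2) k) ^ 2 ∈ I := Ideal.subset_span (by simp)
  have hyx : (X 1 - C t * X 0 : MvPolynomial (Fin 2) k) ∈ I := Ideal.subset_span (by simp)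
  induction p using MvPolynomial.induction_on with
  | C a => exact ⟨a, 0, by simp⟩
  | add p q hp hq =>
    obtain ⟨a, b, hp⟩ := hp
    obtain ⟨a', b', hq⟩ := hq
    refine ⟨a + a', b + b', ?_⟩
    convert I.add_mem hp hq using 1
    simp only [map_add]
    ring
  | mul_X p i hp =>
    obtain ⟨a, b, hp⟩ := hp
    fin_cases i <;> simp only [Fin.zero_eta, Fin.mk_one]
    · refine ⟨0, a, ?_⟩
      convert I.add_mem (I.mul_mem_right (X 0) hp) (I.mul_mem_left (C b) hx2) using 1
      simp only [map_zero]
      ring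
    · refine ⟨0, a * t, ?_⟩
      convert I.add_mem (I.add_mem (I.mul_mem_right (X 1) hp)
        (I.mul_mem_left (C a + C b * X 0) hyx)) (I.mul_mem_left (C (b * t)) hx2) using 1
      simp only [map_zero, map_mul]
      ring

namespace IsMt

variable {k : Type} [Field k] {t : k} {M : Type} [AddCommGroup M]
  [Module (MvPolynomial (Fin 2) k) M] [Module k M]
  [IsScalarTower k (MvPolynomial (Fin 2) k) M] {v : Module.Basis (Fin 4) k M}

local notation "A" => MvPolynomial (Fin 2) k

open Submodule

theorem X_zero_smul (hv : IsMt k t M v) (m : M) :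
    (X 0 : A) • m = v.repr m 0 • v 2 + v.repr m 2 • v 3 := by
  obtain ⟨h0, h1, h2, h3, -⟩ := hv
  conv_lhs => rw [← v.sum_repr m, Fin.sum_univ_four]
  simp only [smul_add, smul_comm (X 0 : A) (_ : k), h0, h1, h2, h3, smul_zero]
  abel

theorem X_one_smul (hv : IsMt k t M v) (m : M) :
    (X 1 : A) • m = (t * v.repr m 0) • v 2 + (v.repr m 1 + t * v.repr m 2) • v 3 := by
  obtain ⟨-, -, -, -, h0, h1, h2, h3⟩ := hv
  conv_lhs => rw [← v.sum_repr m, Fin.sum_univ_four]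
  simp only [smul_add, smul_comm (X 1 : A) (_ : k), h0, h1, h2, h3, smul_zero]
  module

theorem X_zero_smul_X_zero_smul (hv : IsMt k t M v) (m : M) :
    (X 0 : A) • (X 0 : A) • m = v.repr m 0 • v 3 := by
  rw [hv.X_zero_smul m]
  obtain ⟨-, -, h2, h3, -⟩ := hv
  rw [smul_add, smul_comm, smul_comm _ (v.repr m 2), h2, h3, smul_zero, add_zero]

theorem exists_smul_eq_smul_v3 (hv : IsMt k t M v) {z : M} (hz : z ≠ 0) :
    ∃ (p : A) (c : k), c ≠ 0 ∧ p • z = c • v 3 := by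
  obtain hr0 | hr0 := ne_or_eq (v.repr z 0) 0
  · exact ⟨X 0 * X 0, v.repr z 0, hr0, by rw [mul_smul, hv.X_zero_smul_X_zero_smul]⟩
  obtain hr2 | hr2 := ne_or_eq (v.repr z 2) 0
  · exact ⟨X 0, v.repr z 2, hr2, by rw [hv.X_zero_smul z, hr0, zero_smul, zero_add]⟩
  obtain hr1 | hr1 := ne_or_eq (v.repr z 1) 0
  · exact ⟨X 1, v.repr z 1, hr1, by simp [hv.X_one_smul z, hr0, hr2]⟩
  have hz3 : z = v.repr z 3 • v 3 := by
    conv_lhs => rw [← v.sum_repr z, Fin.sum_univ_four]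
    simp [hr0, hr1, hr2]
  refine ⟨1, v.repr z 3, fun h => hz ?_, by rw [one_smul, ← hz3]⟩
  rw [hz3, h, zero_smul]

theorem v3_mem (hv : IsMt k t M v) {N : Submodule A M} (hN : N ≠ ⊥) : v 3 ∈ N := by
  obtain ⟨z, hzN, hz⟩ := N.ne_bot_iff.1 hN
  obtain ⟨p, c, hc, hpz⟩ := hv.exists_smul_eq_smul_v3 hz
  exact ((N.restrictScalars k).smul_mem_iff hc).1 (hpz ▸ N.smul_mem p hzN)

theorem indecomposable (hv : IsMt k t M v) {N₁ N₂ : Submodule A M} (hc : IsCompl N₁ N₂) :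
    N₁ = ⊥ ∨ N₂ = ⊥ :=
  eq_bot_or_eq_bot_of_isCompl_of_forall_mem (v.ne_zero 3) (fun _ => hv.v3_mem) hc

theorem X_smul_mem_span (hv : IsMt k t M v) (i : Fin 2) (m : M) :
    (X i : A) • m ∈ span k {v 2, v 3} := by
  refine mem_span_pair.2 ?_
  fin_cases i
  · exact ⟨_, _, (hv.X_zero_smul m).symm⟩
  · exact ⟨_, _, (hv.X_one_smul m).symm⟩

theorem restrictScalars_span_v2 (hv : IsMt k t M v) :
    (span A {v 2}).restrictScalars k = span k {v 2, v 3} := by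
  apply le_antisymm
  · intro _ hx
    obtain ⟨p, rfl⟩ := mem_span_singleton.1 hx
    exact MvPolynomial.smul_mem_of_forall_X_smul_mem (fun i w _ => hv.X_smul_mem_span i w) p
      (subset_span (by simp))
  · rw [span_le, Set.pair_subset_iff]
    exact ⟨mem_span_singleton_self _, hv.2.2.1 ▸ smul_mem _ _ (mem_span_singleton_self _)⟩

theorem mIdeal_smul_top (hv : IsMt k t M v) :
    mIdeal k • (⊤ : Submodule A M) = span A {v 2} := by
  apply le_antisymm
  · refine smul_le.2 fun r hr m _ => ?_
    obtain ⟨a, b, rfl⟩ := Ideal.mem_span_pair.1 hr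
    have hX (i : Fin 2) : (X i : A) • m ∈ span A {v 2} :=
      hv.restrictScalars_span_v2.ge (hv.X_smul_mem_span i m)
    rw [add_smul, mul_smul, mul_smul]
    exact add_mem (smul_mem _ _ (hX 0)) (smul_mem _ _ (hX 1))
  · rw [span_le, Set.singleton_subset_iff, ← hv.1]
    exact smul_mem_smul (Ideal.subset_span (by simp)) trivial

theorem finrank_quotient_mIdeal_smul_top (hv : IsMt k t M v) :
    Module.finrank k (M ⧸ (mIdeal k • (⊤ : Submodule A M)).restrictScalars k) = 2 := by
  have := Module.Finite.of_basis v
  have h := finrank_quotient_add_finrank (span k {v 2, v 3})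
  rw [v.finrank_span_pair (by decide), Module.finrank_eq_card_basis v, Fintype.card_fin] at h
  rw [hv.mIdeal_smul_top, hv.restrictScalars_span_v2]
  omega

theorem ker_toSpanSingleton_v2 (hv : IsMt k t M v) :
    LinearMap.ker (LinearMap.toSpanSingleton A M (v 2)) =
      Ideal.span {X 0 ^ 2, X 1 - C t * X 0} := by
  obtain ⟨-, -, hx2, hx3, -, -, hy2, -⟩ := hv
  have hC (c : k) (m : M) : (C c : A) • m = c • m := by rw [← algebraMap_eq, algebraMap_smul]
  have hI : Ideal.span {X 0 ^ 2, X 1 - C t * X 0} ≤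
      LinearMap.ker (LinearMap.toSpanSingleton A M (v 2)) := by
    rw [Ideal.span_le, Set.pair_subset_iff]
    constructor <;> simp [sq, mul_smul, sub_smul, hC, hx2, hx3, hy2]
  refine le_antisymm (fun p hp => ?_) hI
  obtain ⟨a, b, hq⟩ := MvPolynomial.exists_sub_C_add_C_mul_X_mem t p
  have hab : a • v 2 + b • v 3 = 0 := by
    have := sub_mem hp (hI hq)
    simpa [sub_smul, add_smul, mul_smul, hC, hx2] using this
  obtain ⟨rfl, rfl⟩ :=
    LinearIndependent.pair_iff.1 (v.linearIndependent_pair (by decide)) a b hab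
  simpa using hq

theorem nonempty_mIdeal_smul_top_equiv (hv : IsMt k t M v) :
    Nonempty (↥(mIdeal k • (⊤ : Submodule A M)) ≃ₗ[A]
      A ⧸ Ideal.span {(X 0 : A) ^ 2, X 1 - C t * X 0}) :=
  ⟨(LinearEquiv.ofEq _ _
      (hv.mIdeal_smul_top.trans (LinearMap.span_singleton_eq_range _ _ _))).trans
    ((LinearMap.toSpanSingleton A M (v 2)).quotKerEquivRange.symm.trans
      (Submodule.quotEquivOfEq _ _ hv.ker_toSpanSingleton_v2))⟩

end IsMt

section Existence

variable (k : Type) [Field k] (t : k)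

/-- Column `j` is the image of the `j`-th standard basis vector. -/
def mtX : Matrix (Fin 4) (Fin 4) k := !![0, 0, 0, 0; 0, 0, 0, 0; 1, 0, 0, 0; 0, 0, 1, 0]

def mtY : Matrix (Fin 4) (Fin 4) k := !![0, 0, 0, 0; 0, 0, 0, 0; t, 0, 0, 0; 0, 1, t, 0]

theorem commute_mtX_mtY : Commute (mtX k) (mtY k t) := by
  ext i j
  fin_cases i <;> fin_cases j <;> simp [mtX, mtY, Matrix.mul_apply, Fin.sum_univ_four]

theorem IsMt.exists :
    ∃ (M : Type) (_ : AddCommGroup M) (_ : Module (MvPolynomial (Fin 2) k) M)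
        (_ : Module k M) (_ : IsScalarTower k (MvPolynomial (Fin 2) k) M)
        (v : Module.Basis (Fin 4) k M), IsMt k t M v := by
  have hc := (commute_mtX_mtY k t).map Matrix.toLinAlgEquiv'
  obtain ⟨_, _, hX⟩ := exists_module_mvPolynomial_of_commute
    ![Matrix.toLin' (mtX k), Matrix.toLin' (mtY k t)] <| by
      simp only [Fin.forall_fin_two]
      exact ⟨⟨Commute.refl _, hc⟩, hc.symm, Commute.refl _⟩
  refine ⟨Fin 4 → k, inferInstance, inferInstance, inferInstance, inferInstance,
    Pi.basisFun k _, ?_⟩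
  simp only [IsMt, hX, Pi.basisFun_apply]
  refine ⟨?_, ?_, ?_, ?_, ?_, ?_, ?_, ?_⟩ <;> ext j <;> fin_cases j <;>
    simp [mtX, mtY, Matrix.toLin'_apply]

end Existence

theorem Mt_wellDefined_indecomposable_general (k : Type) [Field k]
    (t : k) :
    -- well-definedness: such a module exists
    (∃ (M : Type) (_ : AddCommGroup M) (_ : Module (MvPolynomial (Fin 2) k) M)
        (_ : Module k M) (_ : IsScalarTower k (MvPolynomial (Fin 2) k) M)
        (v : Module.Basis (Fin 4) k M), IsMt k t M v) ∧
    -- and any module with this multiplication table has the stated properties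
    ∀ (M : Type) [AddCommGroup M] [Module (MvPolynomial (Fin 2) k) M] [Module k M]
      [IsScalarTower k (MvPolynomial (Fin 2) k) M] (v : Module.Basis (Fin 4) k M),
      IsMt k t M v →
        -- `M_t` is indecomposable
        (∀ N₁ N₂ : Submodule (MvPolynomial (Fin 2) k) M, IsCompl N₁ N₂ → N₁ = ⊥ ∨ N₂ = ⊥) ∧
        -- `M_t` has length `4`
        Module.finrank k M = 4 ∧
        -- `dim_k M_t/(m·M_t) = 2`
        Module.finrank k (M ⧸ (Submodule.restrictScalars k
          ((mIdeal k) • (⊤ : Submodule (MvPolynomial (Fin 2) k) M)))) = 2 ∧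
        -- `m·M_t ≅ A/(x², y − tx)` as `A`-modules
        Nonempty ((↥((mIdeal k) • (⊤ : Submodule (MvPolynomial (Fin 2) k) M)))
          ≃ₗ[MvPolynomial (Fin 2) k]
          (MvPolynomial (Fin 2) k ⧸
            (Ideal.span {(X 0 : MvPolynomial (Fin 2) k) ^ 2, X 1 - C t * X 0}))) := by
  refine ⟨IsMt.exists k t, fun M _ _ _ _ v hv => ⟨fun _ _ => hv.indecomposable, ?_,
    hv.finrank_quotient_mIdeal_smul_top, hv.nonempty_mIdeal_smul_top_equiv⟩⟩
  rw [Module.finrank_eq_card_basis v, Fintype.card_fin]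

/-- For each `t ∈ k`, the module `M_t` with the above multiplication table is
a well-defined (i.e. exists) indecomposable `A = k[x,y]`-module of length `4` with
`dim_k M_t/(m·M_t) = 2` and `m·M_t ≅ A/(x², y − tx)`. -/
theorem Mt_wellDefined_indecomposable (k : Type) [Field k] [IsAlgClosed k] [CharZero k]
    (t : k) :
    -- well-definedness: such a module exists
    (∃ (M : Type) (_ : AddCommGroup M) (_ : Module (MvPolynomial (Fin 2) k) M)
        (_ : Module k M) (_ : IsScalarTower k (MvPolynomial (Fin 2) k) M)
        (v : Module.Basis (Fin 4) k M), IsMt k t M v) ∧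
    -- and any module with this multiplication table has the stated properties
    ∀ (M : Type) [AddCommGroup M] [Module (MvPolynomial (Fin 2) k) M] [Module k M]
      [IsScalarTower k (MvPolynomial (Fin 2) k) M] (v : Module.Basis (Fin 4) k M),
      IsMt k t M v →
        -- `M_t` is indecomposable
        (∀ N₁ N₂ : Submodule (MvPolynomial (Fin 2) k) M, IsCompl N₁ N₂ → N₁ = ⊥ ∨ N₂ = ⊥) ∧
        -- `M_t` has length `4`
        Module.finrank k M = 4 ∧
        -- `dim_k M_t/(m·M_t) = 2`
        Module.finrank k (M ⧸ (Submodule.restrictScalars k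
          ((mIdeal k) • (⊤ : Submodule (MvPolynomial (Fin 2) k) M)))) = 2 ∧
        -- `m·M_t ≅ A/(x², y − tx)` as `A`-modules
        Nonempty ((↥((mIdeal k) • (⊤ : Submodule (MvPolynomial (Fin 2) k) M)))
          ≃ₗ[MvPolynomial (Fin 2) k]
          (MvPolynomial (Fin 2) k ⧸
            (Ideal.span {(X 0 : MvPolynomial (Fin 2) k) ^ 2, X 1 - C t * X 0}))) :=
  Mt_wellDefined_indecomposable_general k t
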